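/- arXiv:2102.00770 — 2 statements merged into one kernel-verified Lean document; each statement's English description precedes it below -/
import Mathlib

section
/- Let e ≥ 2, let w ∈ {3,4}, and let B be a block of e-weight w forming a [w:k]-pair (k ≥ 1) via the residue j carried by runner i. If a partition σ lying in B is exceptional for this pair (i.e., ε_j(σ) ≥ k+1), then |σ(i)| ≥ k+1; that is, the sum of the e-weights of the beads on runner i of the abacus display of σ is at least k+1. -/
/-- A partition: a weakly decreasing function `parts : ℕ → ℕ` (0-indexed),
having exactly `len` nonzero parts. -/
structure AbacusPartition where
  parts : ℕ → ℕ
  antitone : Antitone parts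
  len : ℕ
  pos_of_lt : ∀ i, i < len → 0 < parts i
  zero_of_ge : ∀ i, len ≤ i → parts i = 0

/-- The beta-set (abacus display) of a partition with `r` beads:
positions `λ_i + r - i` for `1 ≤ i ≤ r` (0-indexed: `parts i + (r - 1 - i)`). -/
def AbacusPartition.betaSet (lam : AbacusPartition) (r : ℕ) : Finset ℕ :=
  (Finset.range r).image (fun i => lam.parts i + (r - 1 - i))

/-- e-weight of the bead at position `p` of the display `B`: the number of
unoccupied positions `q < p` with `q ≡ p (mod e)`. -/
def beadWeight (e : ℕ) (B : Finset ℕ) (p : ℕ) : ℕ :=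
  ((Finset.range p).filter (fun q => q % e = p % e ∧ q ∉ B)).card

/-- Total e-weight of the display `B`. -/
def abacusWeight (e : ℕ) (B : Finset ℕ) : ℕ :=
  B.sum (fun p => beadWeight e B p)

/-- e-weight of a partition (computed from the display with `lam.len` beads). -/
def eWeight (e : ℕ) (lam : AbacusPartition) : ℕ :=
  abacusWeight e (lam.betaSet lam.len)

/-- Positions on runner `res` (positions `p` with `p % e = res`), in increasing
order, up to a bound strictly beyond every bead. -/
def posList (e : ℕ) (B : Finset ℕ) (res : ℕ) : List ℕ :=
  (List.range (B.sup id + e + 2)).filter (fun p => p % e == res)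

/-- One step of the signature-reduction automaton; the state is
`(list of surviving '+' positions, stack of pending '−' positions)`.
A '−' occurs at `p` when `p` is occupied and its preceding position unoccupied
(position `-1` counts as occupied); a '+' occurs at `p` when `p` is unoccupied
and its preceding position occupied.  A '+' cancels the most recent pending '−'. -/
def signStep (B : Finset ℕ) (st : List ℕ × List ℕ) (p : ℕ) : List ℕ × List ℕ :=
  if p ∈ B ∧ ¬(p = 0 ∨ p - 1 ∈ B) then (st.1, p :: st.2)
  else if p ∉ B ∧ (p = 0 ∨ p - 1 ∈ B) then
    (match st.2 with
     | [] => (p :: st.1, ([] : List ℕ))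
     | _ :: tl => (st.1, tl))
  else st

/-- Final state of the reduction of the `j`-signature on runner `res`:
`(surviving '+' (conormal) positions, surviving '−' (normal) positions)`,
each list in decreasing order of position. -/
def signState (e : ℕ) (B : Finset ℕ) (res : ℕ) : List ℕ × List ℕ :=
  (posList e B res).foldl (signStep B) ([], [])

/-- Positions of the normal beads on runner `res`, in decreasing order. -/
def normalList (e : ℕ) (B : Finset ℕ) (res : ℕ) : List ℕ := (signState e B res).2

/-- The conormal positions on runner `res`, in decreasing order. -/
def conormalList (e : ℕ) (B : Finset ℕ) (res : ℕ) : List ℕ := (signState e B res).1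

/-- ε: the number of normal beads on runner `res`. -/
def epsB (e : ℕ) (B : Finset ℕ) (res : ℕ) : ℕ := (normalList e B res).length

/-- φ: the number of conormal positions on runner `res`. -/
def phiB (e : ℕ) (B : Finset ℕ) (res : ℕ) : ℕ := (conormalList e B res).length

/-- ε_j of a partition: in the display with `lam.len` beads, residue `j`
is carried by runner `(j + lam.len) % e`. -/
def epsP (e : ℕ) (lam : AbacusPartition) (j : ℕ) : ℕ :=
  epsB e (lam.betaSet lam.len) ((j + lam.len) % e)

/-- φ_j of a partition. -/
def phiP (e : ℕ) (lam : AbacusPartition) (j : ℕ) : ℕ :=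
  phiB e (lam.betaSet lam.len) ((j + lam.len) % e)

/-- Move each bead in `ps` from its position `p` to `p - 1`. -/
def moveDown (B : Finset ℕ) (ps : List ℕ) : Finset ℕ :=
  ps.foldl (fun C p => insert (p - 1) (C.erase p)) B

/-- For each position `p` in `ps`, move the bead at `p - 1` to `p`. -/
def moveUp (B : Finset ℕ) (ps : List ℕ) : Finset ℕ :=
  ps.foldl (fun C p => insert p (C.erase (p - 1))) B

/-- Ẽ^t on displays: move the `t` normal beads at the smallest positions down. -/
def Etil (e : ℕ) (B : Finset ℕ) (res t : ℕ) : Finset ℕ :=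
  moveDown B ((normalList e B res).reverse.take t)

/-- F̃^t on displays: for the `t` largest conormal positions `p`,
move the bead at `p - 1` to `p`. -/
def Ftil (e : ℕ) (B : Finset ℕ) (res t : ℕ) : Finset ℕ :=
  moveUp B ((conormalList e B res).take t)

/-- Number of beads of `B` on runner `i`. -/
def runnerCount (e : ℕ) (B : Finset ℕ) (i : ℕ) : ℕ :=
  (B.filter (fun p => p % e = i)).card

/-- Sum of the e-weights of the beads of `B` on runner `i` (this is `|λ(i)|`). -/
def runnerWeight (e : ℕ) (B : Finset ℕ) (i : ℕ) : ℕ :=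
  (B.filter (fun p => p % e = i)).sum (beadWeight e B)

/-- The display of the e-core: slide every bead as far up its runner as possible. -/
def coreBeta (e : ℕ) (B : Finset ℕ) : Finset ℕ :=
  (Finset.range e).biUnion
    (fun i => (Finset.range (runnerCount e B i)).image (fun m => i + m * e))

/-- `lam` lies in the block with bead counts `bd 0, …, bd (e-1)` and e-weight `w`:
displayed with `r = bd 0 + ⋯ + bd (e-1)` beads it has `bd i` beads on runner `i`
and e-weight `w`. -/
def inBlock (e : ℕ) (bd : ℕ → ℕ) (w : ℕ) (lam : AbacusPartition) : Prop :=
  lam.len ≤ (Finset.range e).sum bd ∧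
  (∀ i < e, runnerCount e (lam.betaSet ((Finset.range e).sum bd)) i = bd i) ∧
  abacusWeight e (lam.betaSet ((Finset.range e).sum bd)) = w

/-- The single-runner beta-set of the partition with parts `ρ` and `c` beads. -/
def oneRunnerBeta (rho : List ℕ) (c : ℕ) : Finset ℕ :=
  (Finset.range c).image (fun t => rho.getD t 0 + (c - 1 - t))

/-- The display of the partition `⟨0_{lamOf 0}, …, (e−1)_{lamOf (e−1)} | bd 0, …, bd (e−1)⟩`. -/
def display (e : ℕ) (bd : ℕ → ℕ) (lamOf : ℕ → List ℕ) : Finset ℕ :=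
  (Finset.range e).biUnion
    (fun i => (oneRunnerBeta (lamOf i) (bd i)).image (fun m => i + m * e))

/-- The operator Ḟ at runner `res`: apply F̃^{φ} (valid when ε = 0 < φ). -/
def dotF (e : ℕ) (B : Finset ℕ) (res : ℕ) : Finset ℕ := Ftil e B res (phiB e B res)

/-- Apply a chain of Ḟ steps. -/
def chainFold (e : ℕ) : Finset ℕ → List ℕ → Finset ℕ
  | B, [] => B
  | B, i :: rest => chainFold e (dotF e B i) rest

/-- The chain of Ḟ steps is semisimple: at each step ε = 0 before, φ > 0 before,
and φ = 0 afterwards. -/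
def validChain (e : ℕ) : Finset ℕ → List ℕ → Prop
  | _, [] => True
  | B, i :: rest =>
      (epsB e B i = 0 ∧ 0 < phiB e B i ∧ phiB e (dotF e B i) i = 0) ∧
      validChain e (dotF e B i) rest

/-- `B` induces semisimply to `C` (displays with the same number of beads). -/
def InducesSS (e : ℕ) (B C : Finset ℕ) : Prop :=
  ∃ L : List ℕ, validChain e B L ∧ chainFold e B L = C

/-- Re-display a beta-set with `s` additional beads. -/
def shiftBeta (B : Finset ℕ) (s : ℕ) : Finset ℕ :=
  B.image (· + s) ∪ Finset.range s

/-- `B` induces semisimply to the partition displayed by `C` (where `C` may use a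
different number of beads). -/
def InducesToPartition (e : ℕ) (B C : Finset ℕ) : Prop :=
  ∃ D : Finset ℕ, InducesSS e B D ∧ shiftBeta D C.card = shiftBeta C D.card

/-- The block with bead counts `bd` and weight `w` is Rouquier:
for all `i < j < e`, `bd i − bd j ≥ w` or `bd j − bd i ≥ w − 1`. -/
def IsRouquier (e w : ℕ) (bd : ℕ → ℕ) : Prop :=
  ∀ i j, i < j → j < e → bd j + w ≤ bd i ∨ bd i + (w - 1) ≤ bd j

/-- `lam` is e-singular: it has `e` consecutive equal nonzero parts. -/
def ESingular (e : ℕ) (lam : AbacusPartition) : Prop :=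
  ∃ i, lam.parts i ≠ 0 ∧ ∀ m < e, lam.parts (i + m) = lam.parts i

/-- `lam` is e-regular. -/
def ERegular (e : ℕ) (lam : AbacusPartition) : Prop := ¬ ESingular e lam

/-- The induced e-sequence of the display `B`, as a multiset: each bead of
positive weight `w` at position `p` contributes `p, p−e, …, p−(w−1)e`. -/
def inducedSeq (e : ℕ) (B : Finset ℕ) : Multiset ℕ :=
  B.val.bind (fun p => (Multiset.range (beadWeight e B p)).map (fun m => p - m * e))

/-- The product order: `lam ≤_P mu` iff they have the same e-core and e-weight and
`s(mu)_r ≥ s(lam)_r` componentwise for all sufficiently large `r`. -/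
def ProdLE (e : ℕ) (lam mu : AbacusPartition) : Prop :=
  (∃ r, lam.len ≤ r ∧ mu.len ≤ r ∧
    coreBeta e (lam.betaSet r) = coreBeta e (mu.betaSet r)) ∧
  eWeight e lam = eWeight e mu ∧
  ∃ r0, ∀ r, r0 ≤ r →
    List.Forall₂ (· ≤ ·) ((inducedSeq e (lam.betaSet r)).sort (· ≤ ·))
      ((inducedSeq e (mu.betaSet r)).sort (· ≤ ·))

/-! Along runner `i` the `j`-signature has one letter per position, and its total charge
`#(−) − #(+)` telescopes to the number of beads on runner `i` minus the number on the preceding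
runner (position `-1` counting as a bead); for a `[w:k]`-pair this is `k`. The surviving `−` signs
are counted by the largest charge of a suffix of the word, so `ε ≥ k + 1` gives a suffix of charge
at least `k + 1`, hence at least `k + 1` beads in it, and a prefix of negative charge, hence an
empty position in it. Every bead of the suffix lies above that gap on runner `i`, so it has
positive weight. -/

/-- The contribution `#(−) − #(+)` of position `p` to a signature. -/
def signDelta (B : Finset ℕ) (p : ℕ) : ℤ :=
  (if p ∈ B then 1 else 0) - (if p = 0 ∨ p - 1 ∈ B then 1 else 0)

def signCharge (B : Finset ℕ) (L : List ℕ) : ℤ := (L.map (signDelta B)).sum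

lemma signCharge_append (B : Finset ℕ) (L L' : List ℕ) :
    signCharge B (L ++ L') = signCharge B L + signCharge B L' := by
  simp [signCharge]

lemma signCharge_eq_countP_sub (B : Finset ℕ) (L : List ℕ) :
    signCharge B L = L.countP (· ∈ B) - L.countP (fun p => p = 0 ∨ p - 1 ∈ B) := by
  induction L with
  | nil => rfl
  | cons p L ih =>
    simp only [signCharge, List.map_cons, List.sum_cons, List.countP_cons] at ih ⊢
    rw [ih, signDelta]
    split_ifs <;> simp_all <;> omega

lemma length_signStep (B : Finset ℕ) (st : List ℕ × List ℕ) (p : ℕ) :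
    ((signStep B st p).2.length : ℤ) = max (st.2.length + signDelta B p) 0 := by
  unfold signStep signDelta
  by_cases hp : p ∈ B <;> by_cases hpred : p = 0 ∨ p - 1 ∈ B
  · simp [hp, hpred]
  · simp [hp, hpred]; omega
  · rcases st with ⟨acc, _ | ⟨m, stack⟩⟩ <;> simp [hp, hpred]
  · simp [hp, hpred]

lemma exists_isSuffix_length_foldl_signStep_le (B : Finset ℕ) (acc : List ℕ) (L : List ℕ) :
    ∃ S, S <:+ L ∧ ((L.foldl (signStep B) (acc, [])).2.length : ℤ) ≤ signCharge B S := by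
  induction L using List.reverseRecOn with
  | nil => exact ⟨[], List.nil_suffix, by simp [signCharge]⟩
  | append_singleton L p ih =>
    obtain ⟨S, hS, hlen⟩ := ih
    rw [List.foldl_append, List.foldl_cons, List.foldl_nil, length_signStep]
    rcases le_or_gt (((L.foldl (signStep B) (acc, [])).2.length : ℤ) + signDelta B p) 0 with h | h
    · exact ⟨[], List.nil_suffix, by simp [signCharge, h]⟩
    · refine ⟨S ++ [p], List.suffix_append_self_iff.mpr hS, ?_⟩
      rw [signCharge_append]
      simp only [signCharge, List.map_cons, List.map_nil, List.sum_cons, List.sum_nil] at hlen ⊢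
      omega

lemma exists_notMem_of_signCharge_neg {B : Finset ℕ} {L : List ℕ} (h : signCharge B L < 0) :
    ∃ q ∈ L, q ∉ B := by
  by_contra! hL
  have hall : L.countP (· ∈ B) = L.length := List.countP_eq_length.mpr (by simpa using hL)
  have := L.countP_le_length (p := fun p => p = 0 ∨ p - 1 ∈ B)
  rw [signCharge_eq_countP_sub] at h
  omega

lemma signCharge_le_countP_mem (B : Finset ℕ) (L : List ℕ) :
    signCharge B L ≤ L.countP (· ∈ B) := by
  rw [signCharge_eq_countP_sub]
  omega

lemma one_le_beadWeight {e : ℕ} {B : Finset ℕ} {p q : ℕ} (hqp : q < p) (hmod : q % e = p % e)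
    (hq : q ∉ B) : 1 ≤ beadWeight e B p :=
  Finset.card_pos.mpr ⟨q, Finset.mem_filter.mpr ⟨Finset.mem_range.mpr hqp, hmod, hq⟩⟩

lemma card_le_runnerWeight {e i q : ℕ} {B T : Finset ℕ} (hT : T ⊆ B.filter (· % e = i))
    (hq : q ∉ B) (hqi : q % e = i) (hlt : ∀ p ∈ T, q < p) : T.card ≤ runnerWeight e B i :=
  calc T.card = ∑ _p ∈ T, 1 := by simp
    _ ≤ ∑ p ∈ T, beadWeight e B p := Finset.sum_le_sum fun p hp =>
        one_le_beadWeight (hlt p hp) (by rw [hqi, (Finset.mem_filter.mp (hT hp)).2]) hq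
    _ ≤ runnerWeight e B i := Finset.sum_le_sum_of_subset hT

lemma mem_posList {e : ℕ} {B : Finset ℕ} {i p : ℕ} :
    p ∈ posList e B i ↔ p < B.sup id + e + 2 ∧ p % e = i := by
  simp [posList]

lemma pairwise_lt_posList (e : ℕ) (B : Finset ℕ) (i : ℕ) : (posList e B i).Pairwise (· < ·) :=
  List.pairwise_lt_range.sublist List.filter_sublist

lemma epsB_le_max_signCharge_runnerWeight (e : ℕ) (B : Finset ℕ) (i : ℕ) :
    (epsB e B i : ℤ) ≤ max (signCharge B (posList e B i)) (runnerWeight e B i) := by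
  obtain ⟨S, ⟨P, hPS⟩, hS⟩ := exists_isSuffix_length_foldl_signStep_le B [] (posList e B i)
  change (epsB e B i : ℤ) ≤ signCharge B S at hS
  by_cases hle : signCharge B S ≤ signCharge B (posList e B i)
  · exact le_max_of_le_left (hS.trans hle)
  rw [← hPS, signCharge_append] at hle
  obtain ⟨q, hqP, hq⟩ := exists_notMem_of_signCharge_neg (by omega : signCharge B P < 0)
  have hsorted := pairwise_lt_posList e B i
  rw [← hPS, List.pairwise_append] at hsorted
  have hrunner : ∀ p ∈ P ++ S, p % e = i := fun p hp => (mem_posList.mp (hPS ▸ hp)).2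
  set T := (S.filter (· ∈ B)).toFinset
  have hT : T ⊆ B.filter (· % e = i) := fun p hp => by
    simp only [T, List.mem_toFinset, List.mem_filter, decide_eq_true_eq] at hp
    exact Finset.mem_filter.mpr ⟨hp.2, hrunner p (List.mem_append_right P hp.1)⟩
  have hcard : S.countP (· ∈ B) = T.card := by
    rw [List.countP_eq_length_filter, List.toFinset_card_of_nodup]
    exact (hsorted.2.1.imp ne_of_lt).filter _
  have hgap := card_le_runnerWeight hT hq (hrunner q (List.mem_append_left S hqP))
    fun p hp => hsorted.2.2 q hqP p (List.mem_of_mem_filter (List.mem_toFinset.mp hp))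
  refine le_max_of_le_right (hS.trans ((signCharge_le_countP_mem B S).trans ?_))
  exact_mod_cast hcard ▸ hgap

lemma countP_mem_posList {e : ℕ} {B T : Finset ℕ} (i : ℕ) (hT : ∀ p ∈ T, p < B.sup id + e + 2) :
    (posList e B i).countP (· ∈ T) = runnerCount e T i := by
  have hnodup : (posList e B i).Nodup := (pairwise_lt_posList e B i).imp ne_of_lt
  rw [List.countP_eq_length_filter, ← List.toFinset_card_of_nodup (hnodup.filter _), runnerCount]
  congr 1
  ext p
  simp only [List.mem_toFinset, List.mem_filter, mem_posList, decide_eq_true_eq,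
    Finset.mem_filter]
  exact ⟨fun h => ⟨h.2, h.1.2⟩, fun h => ⟨⟨hT p h.1, h.2⟩, h.1⟩⟩

lemma mem_shiftBeta_one {B : Finset ℕ} {p : ℕ} : p ∈ shiftBeta B 1 ↔ p = 0 ∨ p - 1 ∈ B := by
  simp only [shiftBeta, Finset.mem_union, Finset.mem_image, Finset.mem_range]
  constructor
  · rintro (⟨q, hq, rfl⟩ | hp)
    · exact Or.inr (by simpa using hq)
    · omega
  · rintro (rfl | hp)
    · simp
    · by_cases hp0 : p = 0
      · simp [hp0]
      · exact Or.inl ⟨p - 1, hp, by omega⟩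

lemma signCharge_posList (e : ℕ) (B : Finset ℕ) (i : ℕ) :
    signCharge B (posList e B i) = runnerCount e B i - runnerCount e (shiftBeta B 1) i := by
  have hle : ∀ p ∈ B, p ≤ B.sup id := fun p hp => Finset.le_sup (f := id) hp
  have hpred : (fun p => decide (p = 0 ∨ p - 1 ∈ B)) = (fun p => decide (p ∈ shiftBeta B 1)) := by
    simp only [mem_shiftBeta_one]
  rw [signCharge_eq_countP_sub, hpred, countP_mem_posList i fun p hp => by have := hle p hp; omega,
    countP_mem_posList i]
  intro p hp
  rcases mem_shiftBeta_one.mp hp with rfl | hp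
  · omega
  · have := hle _ hp
    omega

lemma add_one_mod_eq_iff {a e i : ℕ} (hi : i < e) : (a + 1) % e = i ↔ a % e = (i + e - 1) % e := by
  have hprev : i + e - 1 + 1 ≡ i [MOD e] := by
    rw [show i + e - 1 + 1 = i + e by omega]
    exact Nat.add_mod_right i e
  have hmod : i % e = i := Nat.mod_eq_of_lt hi
  constructor
  · intro h
    exact Nat.ModEq.add_right_cancel' 1 ((h.trans hmod.symm).trans hprev.symm)
  · intro h
    exact Eq.trans ((Nat.ModEq.add_right 1 h).trans hprev) hmod

lemma runnerCount_shiftBeta_one {e i : ℕ} (B : Finset ℕ) (hi : i < e) :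
    runnerCount e (shiftBeta B 1) i = runnerCount e B ((i + e - 1) % e) + if i = 0 then 1 else 0 := by
  have hdisj : Disjoint (B.image (· + 1)) (Finset.range 1) := by
    simp [Finset.disjoint_left]
  rw [runnerCount, shiftBeta, Finset.filter_union, Finset.card_union_of_disjoint
    (Finset.disjoint_filter_filter hdisj), Finset.filter_image,
    Finset.card_image_of_injective _ (add_left_injective 1)]
  simp only [add_one_mod_eq_iff hi, runnerCount]
  congr 1
  rcases Nat.eq_zero_or_pos i with rfl | hpos
  · rw [Finset.range_one, Finset.filter_singleton]
    simp
  · simp [hpos.ne', Nat.zero_mod, hpos.ne]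

theorem stmt5_general (e : ℕ) (w : ℕ)
    (bd : ℕ → ℕ) (k : ℕ) (i : ℕ) (hi : i < e)
    (hpair : (0 < i → bd i = bd (i - 1) + k) ∧ (i = 0 → bd 0 = bd (e - 1) + k + 1))
    (r : ℕ) (hr : r = (Finset.range e).sum bd)
    (sig : AbacusPartition) (hσ : inBlock e bd w sig)
    (hexc : k + 1 ≤ epsB e (sig.betaSet r) i) :
    k + 1 ≤ runnerWeight e (sig.betaSet r) i := by
  subst hr
  obtain ⟨-, hcount, -⟩ := hσ
  set B := sig.betaSet ((Finset.range e).sum bd)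
  have hcharge : signCharge B (posList e B i) = k := by
    rw [signCharge_posList, runnerCount_shiftBeta_one B hi, hcount i hi,
      hcount _ (Nat.mod_lt _ (by omega))]
    rcases Nat.eq_zero_or_pos i with rfl | hpos
    · rw [hpair.2 rfl, zero_add, Nat.mod_eq_of_lt (by omega : e - 1 < e)]
      simp
    · rw [hpair.1 hpos, show i + e - 1 = i - 1 + e by omega, Nat.add_mod_right,
        Nat.mod_eq_of_lt (by omega : i - 1 < e)]
      simp [hpos.ne']
  have hε := epsB_le_max_signCharge_runnerWeight e B i
  rw [hcharge] at hε
  have := (Nat.cast_le.mpr hexc).trans hε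
  push_cast at this
  omega

/-- if a block of weight `w ∈ {3,4}` forms a `[w:k]`-pair via the
residue carried by runner `i`, then any exceptional partition `σ` in the block
(`ε ≥ k+1` on runner `i`) has `|σ(i)| ≥ k+1`, i.e. the beads on runner `i`
carry total e-weight at least `k+1`. -/
theorem stmt5 (e : ℕ) (he : 2 ≤ e) (w : ℕ) (hw34 : w = 3 ∨ w = 4)
    (bd : ℕ → ℕ) (k : ℕ) (hk : 1 ≤ k) (i : ℕ) (hi : i < e)
    (hpair : (0 < i → bd i = bd (i - 1) + k) ∧ (i = 0 → bd 0 = bd (e - 1) + k + 1))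
    (r : ℕ) (hr : r = (Finset.range e).sum bd)
    (sig : AbacusPartition) (hσ : inBlock e bd w sig)
    (hexc : k + 1 ≤ epsB e (sig.betaSet r) i) :
    k + 1 ≤ runnerWeight e (sig.betaSet r) i :=
  stmt5_general e w bd k i hi hpair r hr sig hσ hexc
end

section
/- Let e ≥ 2 and 0 < a < b ≤ c ≤ e, and let B be the block of e-weight 3 with notation ⟨3^a, 5^{b−a}, 4^{c−b}, 3^{e−c}⟩, which forms a [3:2]-pair via the residue j carried by runner a. Then the unique partition lying in B that is exceptional for this pair is ⟨a_{(1,1,1)}⟩. -/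
/-!
Write `S_i` for the set of occupied rows of runner `i`. On runner `a`, row `m` carries a `−` when
`m ∈ S_a \ S_(a-1)` and a `+` when `m ∈ S_(a-1) \ S_a`; every `+` either cancels a `−` or
survives, so `ε − φ = |S_a| − |S_(a-1)| = 5 − 3 = 2`. Since `B` has weight `3`, runner `a` (with
five beads) either has rows `0, 1, 2` full, or displays `(1,1,1)`, the only partition of at most
`3` with at least three parts. In the first case the `−`s of the first three rows cancel every
`+`, so `φ = 0` and `ε = 2`, while `⟨a_(1,1,1)⟩` has row `2` of runner `a` empty. In the second
case runner `a` carries all the weight, so every other runner is closed and `B = ⟨a_(1,1,1)⟩`;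
there the first sign is the `+` of row `2`, which survives, so `ε ≥ 3`.
-/

open Finset

/-- The size of the partition displayed by `S` on a one-runner abacus. -/
def gapWeight (S : Finset ℕ) : ℕ :=
  ∑ m ∈ S, ((range m).filter (· ∉ S)).card

lemma eq_range_card_of_gapWeight_eq_zero {S : Finset ℕ} (h : gapWeight S = 0) :
    S = range S.card := by
  have hclosed : ∀ m ∈ S, range (m + 1) ⊆ S := by
    intro m hm n hn
    by_contra hnS
    have hzero := (sum_eq_zero_iff.mp h) m hm
    rw [card_eq_zero, filter_eq_empty_iff] at hzero
    rcases Nat.lt_succ_iff_lt_or_eq.mp (mem_range.mp hn) with hlt | rfl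
    · exact hzero (mem_range.mpr hlt) hnS
    · exact hnS hm
  refine eq_of_subset_of_card_le (fun m hm => mem_range.mpr ?_) (card_range _).le
  simpa using card_le_card (hclosed m hm)

lemma lt_card_add_gapWeight {S : Finset ℕ} {m : ℕ} (hm : m ∈ S) :
    m < S.card + gapWeight S := by
  have hlt : ((range m).filter (· ∈ S)).card < S.card :=
    card_lt_card ⟨fun x hx => (mem_filter.mp hx).2, fun h => by simpa using h hm⟩
  have hgap : ((range m).filter (· ∉ S)).card ≤ gapWeight S :=
    single_le_sum (f := fun m => ((range m).filter (· ∉ S)).card) (fun _ _ => Nat.zero_le _) hm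
  have := card_filter_add_card_filter_not (s := range m) (p := (· ∈ S))
  rw [card_range] at this
  omega

lemma range_three_subset_or_eq_of_gapWeight_le {S : Finset ℕ} (hcard : S.card = 5)
    (hw : gapWeight S ≤ 3) : range 3 ⊆ S ∨ S = {0, 1, 3, 4, 5} := by
  have hS : S ∈ (range 8).powersetCard 5 :=
    mem_powersetCard.mpr
      ⟨fun m hm => mem_range.mpr (by have := lt_card_add_gapWeight hm; omega), hcard⟩
  have hcheck : ∀ T ∈ (range 8).powersetCard 5, gapWeight T ≤ 3 →
      range 3 ⊆ T ∨ T = {0, 1, 3, 4, 5} := by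
    decide
  exact hcheck S hS hw

section Runners

variable {e : ℕ} {B : Finset ℕ} {i : ℕ}

/-- Runner `i` of `B` as a one-runner display: the rows `m` with a bead at `i + m * e`. -/
def rowSet (e : ℕ) (B : Finset ℕ) (i : ℕ) : Finset ℕ :=
  (B.filter (· % e = i)).image (· / e)

lemma add_mul_mod_of_lt (hi : i < e) (m : ℕ) : (i + m * e) % e = i := by
  rw [Nat.add_mul_mod_self_right, Nat.mod_eq_of_lt hi]

lemma mem_rowSet (hi : i < e) {m : ℕ} : m ∈ rowSet e B i ↔ i + m * e ∈ B := by
  simp only [rowSet, mem_image, mem_filter]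
  constructor
  · rintro ⟨p, ⟨hp, rfl⟩, rfl⟩
    rwa [Nat.mod_add_div']
  · intro hm
    refine ⟨i + m * e, ⟨hm, add_mul_mod_of_lt hi m⟩, ?_⟩
    rw [Nat.add_mul_div_right _ _ (by omega), Nat.div_eq_of_lt hi, zero_add]

lemma card_rowSet : (rowSet e B i).card = runnerCount e B i := by
  refine card_image_of_injOn fun p hp q hq hpq => ?_
  simp only [mem_coe, mem_filter] at hp hq
  rw [← Nat.mod_add_div' p e, ← Nat.mod_add_div' q e, hp.2, hq.2]
  exact congrArg (i + · * e) hpq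

lemma rowSet_display (bd : ℕ → ℕ) (lamOf : ℕ → List ℕ) (hi : i < e) :
    rowSet e (display e bd lamOf) i = oneRunnerBeta (lamOf i) (bd i) := by
  ext m
  simp only [mem_rowSet hi, display, mem_biUnion, mem_image, mem_range]
  constructor
  · rintro ⟨j, hj, n, hn, hjn⟩
    obtain rfl : j = i := by
      simpa only [add_mul_mod_of_lt hj, add_mul_mod_of_lt hi] using congrArg (· % e) hjn
    obtain rfl : n = m := Nat.eq_of_mul_eq_mul_right (by omega) (Nat.add_left_cancel hjn)
    exact hn
  · exact fun hm => ⟨i, hi, m, hm, rfl⟩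

lemma oneRunnerBeta_nil (c : ℕ) : oneRunnerBeta [] c = range c := by
  ext x
  simp only [oneRunnerBeta, mem_image, mem_range, List.getD_nil, zero_add]
  exact ⟨fun ⟨t, ht, hx⟩ => by omega, fun hx => ⟨c - 1 - x, by omega, by omega⟩⟩

lemma eq_display_iff (bd : ℕ → ℕ) (lamOf : ℕ → List ℕ) (he : 0 < e) :
    B = display e bd lamOf ↔ ∀ i < e, rowSet e B i = oneRunnerBeta (lamOf i) (bd i) := by
  refine ⟨fun h i hi => h ▸ rowSet_display bd lamOf hi, fun h => ?_⟩
  ext p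
  have hp := Nat.mod_lt p he
  rw [← Nat.mod_add_div' p e, ← mem_rowSet hp, ← mem_rowSet hp, rowSet_display _ _ hp, h _ hp]

lemma beadWeight_add_mul (hi : i < e) (m : ℕ) :
    beadWeight e B (i + m * e) = ((range m).filter (· ∉ rowSet e B i)).card := by
  have he : 0 < e := by omega
  rw [beadWeight, add_mul_mod_of_lt hi]
  refine card_nbij' (· / e) (i + · * e) (fun q hq => ?_) (fun n hn => ?_)
    (fun q hq => ?_) (fun n _ => ?_)
  · simp only [mem_coe, mem_filter, mem_range, mem_rowSet hi] at hq ⊢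
    rw [← hq.2.1, Nat.mod_add_div']
    refine ⟨?_, hq.2.2⟩
    have := Nat.mod_add_div' q e
    by_contra! h
    nlinarith
  · simp only [mem_coe, mem_filter, mem_range, mem_rowSet hi] at hn ⊢
    refine ⟨?_, add_mul_mod_of_lt hi n, hn.2⟩
    have := Nat.mul_lt_mul_of_pos_right hn.1 he
    omega
  · rw [← (mem_filter.mp hq).2.1]
    exact Nat.mod_add_div' q e
  · simp only [Nat.add_mul_div_right _ _ he, Nat.div_eq_of_lt hi, zero_add]

lemma runnerWeight_eq_gapWeight (hi : i < e) :
    runnerWeight e B i = gapWeight (rowSet e B i) := by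
  rw [runnerWeight, gapWeight, rowSet, sum_image fun p hp q hq hpq => ?_]
  · refine sum_congr rfl fun p hp => ?_
    rw [← Nat.mod_add_div' p e, (mem_filter.mp hp).2, beadWeight_add_mul hi,
      Nat.add_mul_div_right _ _ (by omega), Nat.div_eq_of_lt hi, zero_add]
    rfl
  · simp only [mem_coe, mem_filter] at hp hq
    rw [← Nat.mod_add_div' p e, ← Nat.mod_add_div' q e, hp.2, hq.2]
    exact congrArg (i + · * e) hpq

lemma abacusWeight_eq_sum_gapWeight (he : 0 < e) :
    abacusWeight e B = ∑ i ∈ range e, gapWeight (rowSet e B i) := by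
  rw [abacusWeight, ← sum_fiberwise_of_maps_to (g := (· % e)) (t := range e)
    fun p _ => mem_range.mpr (Nat.mod_lt p he)]
  exact sum_congr rfl fun i hi => runnerWeight_eq_gapWeight (mem_range.mp hi)

lemma gapWeight_rowSet_le_abacusWeight (hi : i < e) :
    gapWeight (rowSet e B i) ≤ abacusWeight e B := by
  rw [abacusWeight_eq_sum_gapWeight (by omega)]
  exact single_le_sum (f := fun i => gapWeight (rowSet e B i)) (fun _ _ => Nat.zero_le _)
    (mem_range.mpr hi)

lemma rowSet_eq_range_of_abacusWeight_eq {a : ℕ} (hae : a < e)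
    (hw : abacusWeight e B = gapWeight (rowSet e B a)) (hi : i < e) (hia : i ≠ a) :
    rowSet e B i = range (runnerCount e B i) := by
  rw [abacusWeight_eq_sum_gapWeight (by omega), ← add_sum_erase _ _ (mem_range.mpr hae),
    add_eq_left, sum_eq_zero_iff] at hw
  rw [← card_rowSet]
  exact eq_range_card_of_gapWeight_eq_zero (hw i (mem_erase.mpr ⟨hia, mem_range.mpr hi⟩))

end Runners

section Signature

variable (B : Finset ℕ)

abbrev MinusAt (p : ℕ) : Prop := p ∈ B ∧ ¬(p = 0 ∨ p - 1 ∈ B)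

abbrev PlusAt (p : ℕ) : Prop := p ∉ B ∧ (p = 0 ∨ p - 1 ∈ B)

variable {B}

lemma signStep_of_minusAt {p : ℕ} (h : MinusAt B p) (st : List ℕ × List ℕ) :
    signStep B st p = (st.1, p :: st.2) := if_pos h

lemma signStep_of_plusAt_nil {p : ℕ} (h : PlusAt B p) (P : List ℕ) :
    signStep B (P, []) p = (p :: P, []) := by
  rw [signStep, if_neg (fun hm => h.1 hm.1), if_pos h]

lemma signStep_of_plusAt_cons {p : ℕ} (h : PlusAt B p) (P N : List ℕ) (x : ℕ) :
    signStep B (P, x :: N) p = (P, N) := by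
  rw [signStep, if_neg (fun hm => h.1 hm.1), if_pos h]

lemma signStep_of_not {p : ℕ} (hm : ¬MinusAt B p) (hp : ¬PlusAt B p)
    (st : List ℕ × List ℕ) : signStep B st p = st := by
  rw [signStep, if_neg hm, if_neg hp]

/-- Every `+` is either recorded as conormal or cancels a pending `−`. -/
lemma foldl_signStep_length (l : List ℕ) (st : List ℕ × List ℕ) :
    (l.foldl (signStep B) st).2.length + l.countP (PlusAt B ·) + st.1.length =
      (l.foldl (signStep B) st).1.length + l.countP (MinusAt B ·) + st.2.length := by
  induction l generalizing st with
  | nil => simp [add_comm]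
  | cons p l ih =>
    obtain ⟨P, N⟩ := st
    rw [List.foldl_cons]
    by_cases hm : MinusAt B p
    · have hp : ¬PlusAt B p := fun hp => hp.1 hm.1
      have := ih (P, p :: N)
      simp only [signStep_of_minusAt hm, List.countP_cons, decide_eq_true hm, decide_eq_false hp,
        Bool.false_eq_true, ↓reduceIte, List.length_cons] at this ⊢
      omega
    by_cases hp : PlusAt B p
    · simp only [List.countP_cons, decide_eq_false hm, decide_eq_true hp, Bool.false_eq_true,
        ↓reduceIte]
      cases N with
      | nil =>
        have := ih (p :: P, [])
        rw [signStep_of_plusAt_nil hp]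
        simp only [List.length_cons] at this ⊢
        omega
      | cons x N =>
        have := ih (P, N)
        rw [signStep_of_plusAt_cons hp]
        simp only [List.length_cons] at this ⊢
        omega
    · simp only [signStep_of_not hm hp, List.countP_cons, decide_eq_false hm, decide_eq_false hp,
        Bool.false_eq_true, ↓reduceIte, add_zero]
      exact ih (P, N)

lemma foldl_signStep_fst_of_countP_le (l : List ℕ) (st : List ℕ × List ℕ)
    (h : l.countP (PlusAt B ·) ≤ st.2.length) : (l.foldl (signStep B) st).1 = st.1 := by
  induction l generalizing st with
  | nil => rfl
  | cons p l ih =>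
    obtain ⟨P, N⟩ := st
    rw [List.foldl_cons]
    by_cases hm : MinusAt B p
    · have hp : ¬PlusAt B p := fun hp => hp.1 hm.1
      simp only [List.countP_cons, decide_eq_false hp, Bool.false_eq_true, ↓reduceIte,
        add_zero] at h
      rw [signStep_of_minusAt hm, ih]
      exact h.trans (Nat.le_succ _)
    by_cases hp : PlusAt B p
    · simp only [List.countP_cons, decide_eq_true hp, ↓reduceIte] at h
      cases N with
      | nil => simp at h
      | cons x N =>
        rw [signStep_of_plusAt_cons hp, ih]
        simpa using h
    · simp only [List.countP_cons, decide_eq_false hp, Bool.false_eq_true, ↓reduceIte,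
        add_zero] at h
      rw [signStep_of_not hm hp, ih _ h]

lemma foldl_signStep_fst_suffix (l : List ℕ) (st : List ℕ × List ℕ) :
    st.1 <:+ (l.foldl (signStep B) st).1 := by
  induction l generalizing st with
  | nil => exact List.suffix_refl _
  | cons p l ih =>
    obtain ⟨P, N⟩ := st
    refine List.IsSuffix.trans ?_ (ih _)
    by_cases hm : MinusAt B p
    · rw [signStep_of_minusAt hm]
    by_cases hp : PlusAt B p
    · cases N with
      | nil => rw [signStep_of_plusAt_nil hp]; exact List.suffix_cons _ _
      | cons x N => rw [signStep_of_plusAt_cons hp]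
    · rw [signStep_of_not hm hp]

end Signature

lemma map_range_eq_append {α : Type*} (f : ℕ → α) {k M : ℕ} (hk : k ≤ M) :
    (List.range M).map f = (List.range k).map f ++ ((List.range M).drop k).map f := by
  conv_lhs => rw [← List.take_append_drop k (List.range M)]
  rw [List.take_range, min_eq_left hk, List.map_append]

lemma countP_range_mem (s : Finset ℕ) (M : ℕ) :
    (List.range M).countP (· ∈ s) = (range M ∩ s).card := by
  rw [← filter_mem_eq_inter, List.countP_eq_length_filter]
  rfl

section RunnerSignature

variable {e : ℕ} {B : Finset ℕ} {a : ℕ}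

lemma exists_posList_eq_map (hae : a < e) :
    ∃ M, posList e B a = (List.range M).map (a + · * e) ∧ ∀ p ∈ B, p + e < a + M * e := by
  have he : 0 < e := by omega
  set N := B.sup id + e + 2
  obtain ⟨M, hM⟩ : ∃ M, ∀ m, m < M ↔ a + m * e < N := by
    refine ⟨(N + (e - 1 - a)) / e, fun m => ?_⟩
    rw [Nat.lt_iff_add_one_le, Nat.le_div_iff_mul_le he, add_mul]
    omega
  refine ⟨M, List.Pairwise.eq_of_mem_iff (r := (· < ·)) ?_ ?_ fun p => ?_, fun p hp => ?_⟩
  · exact List.pairwise_lt_range.sublist List.filter_sublist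
  · exact List.pairwise_map.mpr (List.pairwise_lt_range.imp fun h => by
      have := Nat.mul_lt_mul_of_pos_right h he
      omega)
  · simp only [posList, List.mem_filter, List.mem_range, List.mem_map, beq_iff_eq]
    constructor
    · rintro ⟨hp, rfl⟩
      exact ⟨p / e, (hM _).mpr (by rwa [Nat.mod_add_div']), Nat.mod_add_div' p e⟩
    · rintro ⟨m, hm, rfl⟩
      exact ⟨(hM m).mp hm, add_mul_mod_of_lt hae m⟩
  · have := (hM M).not.mp (lt_irrefl M)
    have := le_sup (f := id) hp
    simp only [id_eq] at this
    omega

lemma lt_of_mem_rowSet {M : ℕ} (hM : ∀ p ∈ B, p + e < a + M * e) (ha : 0 < a) (hae : a < e)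
    {m : ℕ} (hm : m ∈ rowSet e B a ∪ rowSet e B (a - 1)) : m < M := by
  rcases mem_union.mp hm with hm | hm
  · have := hM _ ((mem_rowSet hae).mp hm)
    nlinarith
  · have := hM _ ((mem_rowSet (by omega)).mp hm)
    nlinarith

lemma add_mul_sub_one_mem_iff (ha : 0 < a) (hae : a < e) {m : ℕ} :
    a + m * e - 1 ∈ B ↔ m ∈ rowSet e B (a - 1) := by
  rw [mem_rowSet (by omega), show a + m * e - 1 = a - 1 + m * e by omega]

lemma minusAt_add_mul_iff (ha : 0 < a) (hae : a < e) {m : ℕ} :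
    MinusAt B (a + m * e) ↔ m ∈ rowSet e B a \ rowSet e B (a - 1) := by
  simp only [MinusAt, mem_sdiff, mem_rowSet hae, add_mul_sub_one_mem_iff ha hae,
    Nat.add_eq_zero_iff, ha.ne', false_and, false_or]

lemma plusAt_add_mul_iff (ha : 0 < a) (hae : a < e) {m : ℕ} :
    PlusAt B (a + m * e) ↔ m ∈ rowSet e B (a - 1) \ rowSet e B a := by
  simp only [PlusAt, mem_sdiff, mem_rowSet hae, add_mul_sub_one_mem_iff ha hae,
    Nat.add_eq_zero_iff, ha.ne', false_and, false_or]
  tauto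

lemma countP_minusAt_map_range (ha : 0 < a) (hae : a < e) {M : ℕ} :
    ((List.range M).map (a + · * e)).countP (MinusAt B ·) =
      (range M ∩ (rowSet e B a \ rowSet e B (a - 1))).card := by
  rw [List.countP_map, ← countP_range_mem]
  exact List.countP_congr fun m _ => by
    simpa only [Function.comp, decide_eq_true_iff] using minusAt_add_mul_iff ha hae

lemma countP_plusAt_map_range (ha : 0 < a) (hae : a < e) {M : ℕ} :
    ((List.range M).map (a + · * e)).countP (PlusAt B ·) =
      (range M ∩ (rowSet e B (a - 1) \ rowSet e B a)).card := by
  rw [List.countP_map, ← countP_range_mem]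
  exact List.countP_congr fun m _ => by
    simpa only [Function.comp, decide_eq_true_iff] using plusAt_add_mul_iff ha hae

theorem epsB_add_runnerCount_pred (ha : 0 < a) (hae : a < e) :
    epsB e B a + runnerCount e B (a - 1) = phiB e B a + runnerCount e B a := by
  obtain ⟨M, hpos, hM⟩ := exists_posList_eq_map (B := B) hae
  have hrows : rowSet e B a ∪ rowSet e B (a - 1) ⊆ range M :=
    fun m hm => mem_range.mpr (lt_of_mem_rowSet hM ha hae hm)
  have hcount := foldl_signStep_length (B := B) (posList e B a) ([], [])
  rw [hpos, countP_minusAt_map_range ha hae, countP_plusAt_map_range ha hae,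
    inter_eq_right.mpr (sdiff_subset.trans (subset_union_left.trans hrows)),
    inter_eq_right.mpr (sdiff_subset.trans (subset_union_right.trans hrows))] at hcount
  have h1 := card_sdiff_add_card_inter (rowSet e B a) (rowSet e B (a - 1))
  have h2 := card_sdiff_add_card_inter (rowSet e B (a - 1)) (rowSet e B a)
  rw [inter_comm] at h2
  simp only [epsB, phiB, normalList, conormalList, signState, hpos, ← card_rowSet]
  simp only [List.length_nil, add_zero] at hcount
  omega

theorem phiB_eq_zero_of_range_subset (ha : 0 < a) (hae : a < e) {k : ℕ}
    (hk : range k ⊆ rowSet e B a) (hpred : runnerCount e B (a - 1) ≤ k) : phiB e B a = 0 := by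
  obtain ⟨M, hpos, hM⟩ := exists_posList_eq_map (B := B) hae
  have hkM : k ≤ M := by
    simpa using card_le_card fun m hm =>
      mem_range.mpr (lt_of_mem_rowSet hM ha hae (mem_union_left _ (hk hm)))
  set top := (List.range k).map (a + · * e)
  set rest := ((List.range M).drop k).map (a + · * e)
  have hsplit : posList e B a = top ++ rest := by rw [hpos, map_range_eq_append _ hkM]
  have htop : top.countP (PlusAt B ·) = 0 := by
    rw [countP_plusAt_map_range ha hae, card_eq_zero, ← disjoint_iff_inter_eq_empty]
    exact disjoint_left.mpr fun m hm hm' => (mem_sdiff.mp hm').2 (hk hm)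
  set st := top.foldl (signStep B) ([], [])
  have hst1 : st.1 = [] := foldl_signStep_fst_of_countP_le _ _ (by rw [htop]; exact le_refl _)
  have hst2 : st.2.length = (range k ∩ (rowSet e B a \ rowSet e B (a - 1))).card := by
    have := foldl_signStep_length (B := B) top ([], [])
    rw [hst1, htop, countP_minusAt_map_range ha hae] at this
    simpa using this
  -- the `−`s from the full rows `0, …, k - 1` outnumber all the `+`s of the runner
  have hrest : rest.countP (PlusAt B ·) ≤ st.2.length := by
    calc rest.countP (PlusAt B ·)
        ≤ (posList e B a).countP (PlusAt B ·) := by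
          rw [hsplit]; exact (List.sublist_append_right _ _).countP_le
      _ ≤ (rowSet e B (a - 1) \ rowSet e B a).card := by
          rw [hpos, countP_plusAt_map_range ha hae]; exact card_le_card inter_subset_right
      _ ≤ (rowSet e B (a - 1) \ range k).card := card_le_card (sdiff_subset_sdiff le_rfl hk)
      _ ≤ (range k \ rowSet e B (a - 1)).card :=
          card_sdiff_le_card_sdiff_iff.mpr (by rw [card_rowSet, card_range]; exact hpred)
      _ = st.2.length := by
          rw [hst2, ← inter_sdiff_assoc, inter_eq_left.mpr hk]
  rw [phiB, conormalList, signState, hsplit, List.foldl_append,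
    foldl_signStep_fst_of_countP_le rest st hrest, hst1, List.length_nil]

theorem phiB_pos_of_first_sign_plus (ha : 0 < a) (hae : a < e) {k : ℕ}
    (hsame : ∀ m < k, m ∈ rowSet e B a ↔ m ∈ rowSet e B (a - 1))
    (hk : k ∈ rowSet e B (a - 1) \ rowSet e B a) : 0 < phiB e B a := by
  obtain ⟨M, hpos, hM⟩ := exists_posList_eq_map (B := B) hae
  have hkM : k + 1 ≤ M := lt_of_mem_rowSet hM ha hae (mem_union_right _ (mem_sdiff.mp hk).1)
  set top := (List.range k).map (a + · * e)
  have hsplit : posList e B a =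
      top ++ (a + k * e) :: ((List.range M).drop (k + 1)).map (a + · * e) := by
    rw [hpos, map_range_eq_append _ hkM, List.range_succ, List.map_append, List.append_assoc]
    rfl
  have hminus : top.countP (MinusAt B ·) = 0 := by
    rw [countP_minusAt_map_range ha hae, card_eq_zero, eq_empty_iff_forall_notMem]
    simp only [mem_inter, mem_sdiff, mem_range]
    exact fun m ⟨hm, h1, h2⟩ => h2 ((hsame m hm).mp h1)
  have hplus : top.countP (PlusAt B ·) = 0 := by
    rw [countP_plusAt_map_range ha hae, card_eq_zero, eq_empty_iff_forall_notMem]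
    simp only [mem_inter, mem_sdiff, mem_range]
    exact fun m ⟨hm, h1, h2⟩ => h2 ((hsame m hm).mpr h1)
  have hfst : (top.foldl (signStep B) ([], [])).1 = [] :=
    foldl_signStep_fst_of_countP_le _ _ (by rw [hplus]; exact le_refl _)
  have hlen := foldl_signStep_length (B := B) top ([], [])
  rw [hplus, hminus, hfst] at hlen
  have htop : top.foldl (signStep B) ([], []) = ([], []) :=
    Prod.ext hfst (List.eq_nil_of_length_eq_zero (by simpa using hlen))
  rw [phiB, conormalList, signState, hsplit, List.foldl_append, htop, List.foldl_cons,
    signStep_of_plusAt_nil ((plusAt_add_mul_iff ha hae).mpr hk)]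
  exact (foldl_signStep_fst_suffix (B := B) _ ([a + k * e], [])).length_le

end RunnerSignature

theorem stmt8_general (e a b c : ℕ) (ha : 0 < a) (hab : a < b) (hbc : b ≤ c)
    (hce : c ≤ e) (bd : ℕ → ℕ)
    (hbd : bd = fun i => if i < a then 3 else if i < b then 5 else if i < c then 4 else 3)
    (r : ℕ) (hr : r = (Finset.range e).sum bd)
    (lam : AbacusPartition) (hlam : inBlock e bd 3 lam)
    (B : Finset ℕ) (hB : B = lam.betaSet r) :
    3 ≤ epsB e B a ↔ B = display e bd (fun m => if m = a then [1, 1, 1] else []) := by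
  obtain ⟨-, hcount, hweight⟩ := hlam
  rw [← hr, ← hB] at hcount hweight
  have hae : a < e := by omega
  have hbd_a : bd a = 5 := by simp [hbd, hab]
  have hcount_pred : runnerCount e B (a - 1) = 3 := by
    rw [hcount _ (by omega), hbd]; simp [show a - 1 < a by omega]
  have heps : epsB e B a = phiB e B a + 2 := by
    have := epsB_add_runnerCount_pred (B := B) ha hae
    rw [hcount a hae, hbd_a] at this
    omega
  rw [eq_display_iff _ _ (by omega)]
  rcases range_three_subset_or_eq_of_gapWeight_le (by rw [card_rowSet, hcount a hae, hbd_a])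
    (hweight ▸ gapWeight_rowSet_le_abacusWeight hae) with hfull | hexc
  · have hphi := phiB_eq_zero_of_range_subset ha hae hfull hcount_pred.le
    refine iff_of_false (by omega) fun hdisp => ?_
    have h2 := hfull (mem_range.mpr (by norm_num : 2 < 3))
    rw [hdisp a hae, if_pos rfl, hbd_a] at h2
    revert h2
    decide
  · have hclosed : ∀ i < e, i ≠ a → rowSet e B i = range (runnerCount e B i) :=
      fun i hi hia => rowSet_eq_range_of_abacusWeight_eq hae (by rw [hweight, hexc]; decide) hi hia
    have hpred : rowSet e B (a - 1) = {0, 1, 2} := by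
      rw [hclosed _ (by omega) (by omega), hcount_pred]
      decide
    have hphi := phiB_pos_of_first_sign_plus ha hae (k := 2) (by rw [hexc, hpred]; decide)
      (by rw [hexc, hpred]; decide)
    refine iff_of_true (by omega) fun i hi => ?_
    by_cases hia : i = a
    · rw [hia, if_pos rfl, hexc, hbd_a]
      decide
    · rw [if_neg hia, oneRunnerBeta_nil, hclosed i hi hia, hcount i hi]

/-- the unique exceptional partition for the `[3:2]`-pair formed by
the block `⟨3^a, 5^{b−a}, 4^{c−b}, 3^{e−c}⟩` via the residue carried by runner `a`
is `⟨a_{(1,1,1)}⟩`. -/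
theorem stmt8 (e a b c : ℕ) (he : 2 ≤ e) (ha : 0 < a) (hab : a < b) (hbc : b ≤ c)
    (hce : c ≤ e) (bd : ℕ → ℕ)
    (hbd : bd = fun i => if i < a then 3 else if i < b then 5 else if i < c then 4 else 3)
    (r : ℕ) (hr : r = (Finset.range e).sum bd)
    (lam : AbacusPartition) (hlam : inBlock e bd 3 lam)
    (B : Finset ℕ) (hB : B = lam.betaSet r) :
    3 ≤ epsB e B a ↔ B = display e bd (fun m => if m = a then [1, 1, 1] else []) :=
  stmt8_general e a b c ha hab hbc hce bd hbd r hr lam hlam B hB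
end
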